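/- Let G be a finite subgroup of GL_n(ℝ). A ring homomorphism φ: ℝ[X]^G → ℝ extends to a ring homomorphism ℝ[X] → ℝ if and only if φ(f) ≥ 0 for every f ∈ ℝ[X]^G that is a sum of squares of polynomials in ℝ[X]. -/

import Mathlib

open MvPolynomial
set_option maxHeartbeats 1000000
set_option synthInstance.maxHeartbeats 400000
set_option linter.unusedSectionVars false

/-- The action of `σ ∈ GL_n(ℝ)` on real polynomials, `(σ · p)(x) = p(σ⁻¹ x)`,
given by substituting `X i ↦ ∑ j (σ⁻¹)_{i j} X j`. -/
noncomputable def polyAct {n : ℕ} (σ : Matrix.GeneralLinearGroup (Fin n) ℝ) :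
    MvPolynomial (Fin n) ℝ →ₐ[ℝ] MvPolynomial (Fin n) ℝ :=
  aeval fun i => ∑ j, (σ⁻¹).val i j • X j

/-- The subalgebra `ℝ[X]^G` of `G`-invariant polynomials. -/
noncomputable def invariants {n : ℕ} (G : Subgroup (Matrix.GeneralLinearGroup (Fin n) ℝ)) :
    Subalgebra ℝ (MvPolynomial (Fin n) ℝ) where
  carrier := {p | ∀ σ ∈ G, polyAct σ p = p}
  mul_mem' := fun hp hq σ hσ => by rw [map_mul, hp σ hσ, hq σ hσ]
  one_mem' := fun σ _ => map_one (polyAct σ)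
  add_mem' := fun hp hq σ hσ => by rw [map_add, hp σ hσ, hq σ hσ]
  zero_mem' := fun σ _ => map_zero (polyAct σ)
  algebraMap_mem' := fun r σ _ => (polyAct σ).commutes r

/-- The Reynolds operator `R_H(p) = (1/|H|) ∑_{σ ∈ H} σ · p` of a (finite) subgroup `H`. -/
noncomputable def reynolds {n : ℕ} (H : Subgroup (Matrix.GeneralLinearGroup (Fin n) ℝ))
    (p : MvPolynomial (Fin n) ℝ) : MvPolynomial (Fin n) ℝ :=
  (Nat.card H : ℝ)⁻¹ • ∑ᶠ σ ∈ (H : Set (Matrix.GeneralLinearGroup (Fin n) ℝ)), polyAct σ p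


section PA
variable {n : ℕ}


lemma polyAct_one : polyAct (1 : Matrix.GeneralLinearGroup (Fin n) ℝ) = AlgHom.id ℝ _ := by
  apply MvPolynomial.algHom_ext
  intro i
  simp [polyAct, Matrix.one_apply, ite_smul]

lemma polyAct_one_apply (p : MvPolynomial (Fin n) ℝ) :
    polyAct (1 : Matrix.GeneralLinearGroup (Fin n) ℝ) p = p := by
  rw [polyAct_one]; rfl

lemma polyAct_mul (σ τ : Matrix.GeneralLinearGroup (Fin n) ℝ) (p : MvPolynomial (Fin n) ℝ) :
    polyAct (σ * τ) p = polyAct σ (polyAct τ p) := by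
  have : polyAct (σ * τ) = (polyAct σ).comp (polyAct τ) := by
    apply MvPolynomial.algHom_ext
    intro i
    simp only [polyAct, AlgHom.coe_comp, Function.comp_apply, aeval_X, map_sum, map_smul,
      mul_inv_rev, Units.val_mul, Matrix.mul_apply, Finset.sum_smul, smul_smul, Finset.smul_sum]
    rw [Finset.sum_comm]
  rw [this]; rfl

end PA

variable {n : ℕ} (G : Subgroup (Matrix.GeneralLinearGroup (Fin n) ℝ)) [Finite G]

lemma Gfin : (G : Set (Matrix.GeneralLinearGroup (Fin n) ℝ)).Finite := Set.toFinite _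

lemma reynolds_eq (p : MvPolynomial (Fin n) ℝ) :
    reynolds G p = (Nat.card G : ℝ)⁻¹ • ∑ σ ∈ (Gfin G).toFinset, polyAct σ p := by
  rw [reynolds, finsum_mem_eq_finite_toFinset_sum _ (Gfin G)]

lemma mem_Gfin {σ : Matrix.GeneralLinearGroup (Fin n) ℝ} :
    σ ∈ (Gfin G).toFinset ↔ σ ∈ G := Set.Finite.mem_toFinset _

lemma card_G_pos : (0:ℝ) < (Nat.card G : ℝ) := by
  have : 0 < Nat.card G := Nat.card_pos
  exact_mod_cast this

lemma reynolds_mem (p : MvPolynomial (Fin n) ℝ) : reynolds G p ∈ invariants G := by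
  intro τ hτ
  rw [reynolds_eq, map_smul, map_sum]
  congr 1
  rw [show ∑ x ∈ (Gfin G).toFinset, (polyAct τ) ((polyAct x) p)
      = ∑ x ∈ (Gfin G).toFinset, (polyAct (τ * x)) p from
    Finset.sum_congr rfl fun σ _ => (polyAct_mul τ σ p).symm]
  refine Finset.sum_equiv (Equiv.mulLeft τ) (fun x => ?_) (fun x _ => rfl)
  simp only [mem_Gfin, Equiv.coe_mulLeft]
  exact ⟨fun h => G.mul_mem hτ h, fun h => by
    have := G.mul_mem (G.inv_mem hτ) h; rwa [inv_mul_cancel_left] at this⟩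

lemma reynolds_add (p q : MvPolynomial (Fin n) ℝ) :
    reynolds G (p + q) = reynolds G p + reynolds G q := by
  simp [reynolds_eq, map_add, Finset.sum_add_distrib, smul_add]

lemma reynolds_invariant_mul {f : MvPolynomial (Fin n) ℝ} (hf : f ∈ invariants G)
    (p : MvPolynomial (Fin n) ℝ) : reynolds G (f * p) = f * reynolds G p := by
  rw [reynolds_eq, reynolds_eq, mul_smul_comm, Finset.mul_sum]
  congr 1
  refine Finset.sum_congr rfl fun σ hσ => ?_
  rw [map_mul, hf σ ((mem_Gfin G).1 hσ)]

lemma reynolds_of_mem {f : MvPolynomial (Fin n) ℝ} (hf : f ∈ invariants G) :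
    reynolds G f = f := by
  have h1 : ∀ σ ∈ (Gfin G).toFinset, polyAct σ f = f :=
    fun σ hσ => hf σ ((mem_Gfin G).1 hσ)
  rw [reynolds_eq, Finset.sum_congr rfl h1, Finset.sum_const]
  have hcard : (Gfin G).toFinset.card = Nat.card G :=
    (Nat.card_eq_card_finite_toFinset (Gfin G)).symm
  rw [hcard, ← Nat.cast_smul_eq_nsmul ℝ, smul_smul,
    inv_mul_cancel₀ (card_G_pos G).ne', one_smul]

section SOS
variable {n : ℕ}

def IsSOS (p : MvPolynomial (Fin n) ℝ) : Prop :=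
  ∃ (m : ℕ) (g : Fin m → MvPolynomial (Fin n) ℝ), p = ∑ s, (g s) ^ 2

lemma IsSOS.zero : IsSOS (0 : MvPolynomial (Fin n) ℝ) :=
  ⟨0, fun i => i.elim0, by simp⟩

lemma IsSOS.sq (p : MvPolynomial (Fin n) ℝ) : IsSOS (p ^ 2) :=
  ⟨1, fun _ => p, by simp⟩

lemma IsSOS.add {p q : MvPolynomial (Fin n) ℝ} (hp : IsSOS p) (hq : IsSOS q) :
    IsSOS (p + q) := by
  obtain ⟨m, g, rfl⟩ := hp
  obtain ⟨m', g', rfl⟩ := hq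
  refine ⟨m + m', Fin.append g g', ?_⟩
  rw [Fin.sum_univ_add]
  simp [Fin.append_left, Fin.append_right]

lemma IsSOS.mul {p q : MvPolynomial (Fin n) ℝ} (hp : IsSOS p) (hq : IsSOS q) :
    IsSOS (p * q) := by
  obtain ⟨m, g, rfl⟩ := hp
  obtain ⟨m', g', rfl⟩ := hq
  refine ⟨m * m', fun k => g (finProdFinEquiv.symm k).1 * g' (finProdFinEquiv.symm k).2, ?_⟩
  rw [Finset.sum_mul_sum, ← Equiv.sum_comp (finProdFinEquiv :
    Fin m × Fin m' ≃ Fin (m * m')) (fun k => (g (finProdFinEquiv.symm k).1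
      * g' (finProdFinEquiv.symm k).2) ^ 2)]
  simp [Fintype.sum_prod_type, mul_pow]

lemma IsSOS.smul {c : ℝ} (hc : 0 ≤ c) {p : MvPolynomial (Fin n) ℝ} (hp : IsSOS p) :
    IsSOS (c • p) := by
  obtain ⟨m, g, rfl⟩ := hp
  refine ⟨m, fun s => C (Real.sqrt c) * g s, ?_⟩
  rw [smul_eq_C_mul, Finset.mul_sum]
  refine Finset.sum_congr rfl fun s _ => ?_
  rw [mul_pow, ← C_pow, Real.sq_sqrt hc]

lemma IsSOS.sum {α : Type*} (t : Finset α) (f : α → MvPolynomial (Fin n) ℝ)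
    (h : ∀ a ∈ t, IsSOS (f a)) : IsSOS (∑ a ∈ t, f a) := by
  classical
  induction t using Finset.induction_on with
  | empty => simpa using IsSOS.zero
  | insert _ _ hx ih =>
    rw [Finset.sum_insert hx]
    exact (h _ (Finset.mem_insert_self _ _)).add
      (ih fun a ha => h a (Finset.mem_insert_of_mem ha))

lemma IsSOS.algHom (ψ : MvPolynomial (Fin n) ℝ →ₐ[ℝ] MvPolynomial (Fin n) ℝ)
    {p : MvPolynomial (Fin n) ℝ} (hp : IsSOS p) : IsSOS (ψ p) := by
  obtain ⟨m, g, rfl⟩ := hp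
  exact ⟨m, fun s => ψ (g s), by simp⟩

end SOS

lemma IsSOS.reynolds {p : MvPolynomial (Fin n) ℝ} (hp : IsSOS p) : IsSOS (reynolds G p) := by
  rw [reynolds_eq]
  refine IsSOS.smul (inv_nonneg.2 (card_G_pos G).le) (IsSOS.sum _ _ fun σ _ => ?_)
  exact hp.algHom (polyAct σ)

lemma reynolds_zero : reynolds G (0 : MvPolynomial (Fin n) ℝ) = 0 := by
  simp [reynolds_eq]

variable (φ : invariants G →+* ℝ)

lemma phi_algebraMap (r : ℝ) : φ (algebraMap ℝ (invariants G) r) = r := by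
  have h : φ.comp (algebraMap ℝ (invariants G)) = RingHom.id ℝ := Subsingleton.elim _ _
  exact RingHom.congr_fun h r

noncomputable def extIdeal : Ideal (MvPolynomial (Fin n) ℝ) := Ideal.span
  {q | ∃ f, ∃ hf : f ∈ invariants G, q = f - C (φ ⟨f, hf⟩)}

noncomputable def Phi (p : MvPolynomial (Fin n) ℝ) : ℝ := φ ⟨reynolds G p, reynolds_mem G p⟩

lemma Phi_add (p q : MvPolynomial (Fin n) ℝ) : Phi G φ (p + q) = Phi G φ p + Phi G φ q := by
  unfold Phi
  rw [← φ.map_add]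
  congr 1
  exact Subtype.ext (reynolds_add G p q)

lemma Phi_zero : Phi G φ 0 = 0 := by
  unfold Phi
  have h : (⟨reynolds G 0, reynolds_mem G 0⟩ : invariants G) = 0 :=
    Subtype.ext (reynolds_zero G)
  rw [h, φ.map_zero]

lemma Phi_one : Phi G φ 1 = 1 := by
  unfold Phi
  have h : (⟨reynolds G 1, reynolds_mem G 1⟩ : invariants G) = 1 :=
    Subtype.ext (reynolds_of_mem G (one_mem (invariants G)))
  rw [h, φ.map_one]

lemma Phi_sum {α : Type*} (t : Finset α) (f : α → MvPolynomial (Fin n) ℝ) :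
    Phi G φ (∑ a ∈ t, f a) = ∑ a ∈ t, Phi G φ (f a) := by
  classical
  induction t using Finset.induction_on with
  | empty => simpa using Phi_zero G φ
  | insert _ _ hx ih => rw [Finset.sum_insert hx, Finset.sum_insert hx, Phi_add, ih]

lemma Phi_invariant {f : MvPolynomial (Fin n) ℝ} (hf : f ∈ invariants G) :
    Phi G φ f = φ ⟨f, hf⟩ := by
  unfold Phi
  congr 1
  exact Subtype.ext (reynolds_of_mem G hf)

lemma Phi_gen (h f : MvPolynomial (Fin n) ℝ) (hf : f ∈ invariants G) :
    Phi G φ (h * (f - C (φ ⟨f, hf⟩))) = 0 := by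
  set c := φ ⟨f, hf⟩ with hc
  have hCc : C c ∈ invariants G := by
    rw [← MvPolynomial.algebraMap_eq]
    exact Subalgebra.algebraMap_mem _ c
  have hfc : f - C c ∈ invariants G := sub_mem hf hCc
  have hr : reynolds G (h * (f - C c)) = (f - C c) * reynolds G h := by
    rw [mul_comm, reynolds_invariant_mul G hfc]
  unfold Phi
  have h2 : (⟨reynolds G (h * (f - C c)), reynolds_mem G _⟩ : invariants G)
      = ⟨f - C c, hfc⟩ * ⟨reynolds G h, reynolds_mem G h⟩ := Subtype.ext hr
  rw [h2, φ.map_mul]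
  have h3 : (⟨f - C c, hfc⟩ : invariants G) = ⟨f, hf⟩ - algebraMap ℝ (invariants G) c := by
    apply Subtype.ext
    simp [MvPolynomial.algebraMap_eq]
  rw [h3, φ.map_sub, phi_algebraMap, ← hc, sub_self, zero_mul]

lemma Phi_extIdeal_zero {p : MvPolynomial (Fin n) ℝ} (hp : p ∈ extIdeal G φ) :
    Phi G φ p = 0 := by
  classical
  rw [extIdeal] at hp
  obtain ⟨c, hsupp, rfl⟩ := Submodule.mem_span_set.mp hp
  rw [Finsupp.sum, Phi_sum]
  refine Finset.sum_eq_zero fun q hq => ?_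
  obtain ⟨f, hf, rfl⟩ := hsupp hq
  rw [smul_eq_mul]
  exact Phi_gen G φ _ f hf

lemma extIdeal_ne_top : extIdeal G φ ≠ ⊤ := by
  intro h
  have h1 : (1 : MvPolynomial (Fin n) ℝ) ∈ extIdeal G φ := h ▸ Submodule.mem_top
  have h2 := Phi_extIdeal_zero G φ h1
  rw [Phi_one] at h2
  exact one_ne_zero h2

lemma mk_invariant {f : MvPolynomial (Fin n) ℝ} (hf : f ∈ invariants G) :
    Ideal.Quotient.mk (extIdeal G φ) f
      = algebraMap ℝ (MvPolynomial (Fin n) ℝ ⧸ extIdeal G φ) (φ ⟨f, hf⟩) := by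
  have hgen : f - C (φ ⟨f, hf⟩) ∈ extIdeal G φ := Ideal.subset_span ⟨f, hf, rfl⟩
  have h1 : Ideal.Quotient.mk (extIdeal G φ) f
      = Ideal.Quotient.mk (extIdeal G φ) (C (φ ⟨f, hf⟩)) := Ideal.Quotient.eq.mpr hgen
  rw [h1, ← MvPolynomial.algebraMap_eq, Ideal.Quotient.mk_algebraMap]

lemma mk_isIntegral (p : MvPolynomial (Fin n) ℝ) :
    IsIntegral ℝ (Ideal.Quotient.mk (extIdeal G φ) p) := by
  classical
  set P : Polynomial (MvPolynomial (Fin n) ℝ) :=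
    ∏ σ ∈ (Gfin G).toFinset, (Polynomial.X - Polynomial.C (polyAct σ p)) with hP
  have hmonic : P.Monic :=
    Polynomial.monic_prod_of_monic _ _ fun σ _ => Polynomial.monic_X_sub_C _
  have hcoeff : ∀ k, P.coeff k ∈ invariants G := by
    intro k τ hτ
    have hmap : P.map ((polyAct τ : MvPolynomial (Fin n) ℝ →ₐ[ℝ] MvPolynomial (Fin n) ℝ) :
        MvPolynomial (Fin n) ℝ →+* MvPolynomial (Fin n) ℝ) = P := by
      rw [hP, Polynomial.map_prod]
      have hterm : ∀ σ ∈ (Gfin G).toFinset,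
          (Polynomial.X - Polynomial.C (polyAct σ p)).map
            ((polyAct τ : MvPolynomial (Fin n) ℝ →ₐ[ℝ] MvPolynomial (Fin n) ℝ) :
              MvPolynomial (Fin n) ℝ →+* MvPolynomial (Fin n) ℝ)
            = Polynomial.X - Polynomial.C (polyAct (τ * σ) p) := by
        intro σ _
        rw [Polynomial.map_sub, Polynomial.map_X, Polynomial.map_C]
        rw [polyAct_mul]
        rfl
      rw [Finset.prod_congr rfl hterm]
      refine Finset.prod_equiv (Equiv.mulLeft τ) (fun x => ?_) (fun x _ => rfl)
      simp only [mem_Gfin, Equiv.coe_mulLeft]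
      exact ⟨fun h => G.mul_mem hτ h, fun h => by
        have := G.mul_mem (G.inv_mem hτ) h; rwa [inv_mul_cancel_left] at this⟩
    conv_rhs => rw [← hmap]
    rw [Polynomial.coeff_map]
    rfl
  have heval : P.eval p = 0 := by
    rw [hP, Polynomial.eval_prod]
    apply Finset.prod_eq_zero ((mem_Gfin G).2 G.one_mem)
    rw [Polynomial.eval_sub, Polynomial.eval_X, Polynomial.eval_C, polyAct_one_apply, sub_self]
  haveI : Nontrivial (MvPolynomial (Fin n) ℝ ⧸ extIdeal G φ) :=
    Ideal.Quotient.nontrivial_iff.mpr (extIdeal_ne_top G φ)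
  have hlift : P.map (Ideal.Quotient.mk (extIdeal G φ)) ∈
      Polynomial.lifts (algebraMap ℝ (MvPolynomial (Fin n) ℝ ⧸ extIdeal G φ)) := by
    rw [Polynomial.lifts_iff_coeff_lifts]
    intro k
    rw [Polynomial.coeff_map]
    exact ⟨φ ⟨P.coeff k, hcoeff k⟩, (mk_invariant G φ (hcoeff k)).symm⟩
  obtain ⟨Q, hQmap, _, hQmonic⟩ :=
    Polynomial.lifts_and_degree_eq_and_monic hlift
      (hmonic.map (Ideal.Quotient.mk (extIdeal G φ)))
  refine ⟨Q, hQmonic, ?_⟩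
  calc Polynomial.eval₂ (algebraMap ℝ (MvPolynomial (Fin n) ℝ ⧸ extIdeal G φ))
        (Ideal.Quotient.mk (extIdeal G φ) p) Q
      = (Q.map (algebraMap ℝ (MvPolynomial (Fin n) ℝ ⧸ extIdeal G φ))).eval
          (Ideal.Quotient.mk (extIdeal G φ) p) := (Polynomial.eval_map _ _).symm
    _ = (P.map (Ideal.Quotient.mk (extIdeal G φ))).eval
          (Ideal.Quotient.mk (extIdeal G φ) p) := by rw [hQmap]
    _ = 0 := by
          rw [Polynomial.eval_map, Polynomial.eval₂_at_apply, heval, map_zero]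

lemma finite_B : Module.Finite ℝ (MvPolynomial (Fin n) ℝ ⧸ extIdeal G φ) := by
  haveI : Algebra.IsIntegral ℝ (MvPolynomial (Fin n) ℝ ⧸ extIdeal G φ) :=
    ⟨fun x => by
      obtain ⟨p, rfl⟩ := Ideal.Quotient.mk_surjective x
      exact mk_isIntegral G φ p⟩
  haveI : Algebra.FiniteType ℝ (MvPolynomial (Fin n) ℝ ⧸ extIdeal G φ) :=
    Algebra.FiniteType.of_surjective (Ideal.Quotient.mkₐ ℝ _)
      (Ideal.Quotient.mkₐ_surjective ℝ _)
  exact Algebra.IsIntegral.finite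

lemma exists_sqrt_neg_one
    (hψ : ¬ Nonempty ((MvPolynomial (Fin n) ℝ ⧸ extIdeal G φ) →ₐ[ℝ] ℝ))
    (m : Ideal (MvPolynomial (Fin n) ℝ ⧸ extIdeal G φ)) (hm : m.IsMaximal) :
    ∃ u : MvPolynomial (Fin n) ℝ ⧸ extIdeal G φ, u ^ 2 + 1 ∈ m := by
  haveI := hm
  haveI := finite_B G φ
  haveI : Module.Finite ℝ ((MvPolynomial (Fin n) ℝ ⧸ extIdeal G φ) ⧸ m) :=
    Module.Finite.of_surjective (Ideal.Quotient.mkₐ ℝ m).toLinearMap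
      (Ideal.Quotient.mkₐ_surjective ℝ m)
  haveI : Module.IsTorsionFree ℝ ((MvPolynomial (Fin n) ℝ ⧸ extIdeal G φ) ⧸ m) :=
    Module.isTorsionFree_iff_algebraMap_injective.mpr
      (algebraMap ℝ ((MvPolynomial (Fin n) ℝ ⧸ extIdeal G φ) ⧸ m)).injective
  haveI : IsDomain ((MvPolynomial (Fin n) ℝ ⧸ extIdeal G φ) ⧸ m) := Ideal.Quotient.isDomain m
  haveI : Algebra.IsAlgebraic ℝ ((MvPolynomial (Fin n) ℝ ⧸ extIdeal G φ) ⧸ m) :=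
    Algebra.IsIntegral.isAlgebraic
  let j : ((MvPolynomial (Fin n) ℝ ⧸ extIdeal G φ) ⧸ m) →ₐ[ℝ] ℂ :=
    IsAlgClosed.lift (R := ℝ) (S := (MvPolynomial (Fin n) ℝ ⧸ extIdeal G φ) ⧸ m) (M := ℂ)
  set K := (MvPolynomial (Fin n) ℝ ⧸ extIdeal G φ) ⧸ m with hK
  letI : CommRing K := Ideal.Quotient.commRing m
  letI : Algebra ℝ K := Ideal.instAlgebraQuotient ℝ m
  by_cases hz : ∃ k : K, (j k).im ≠ 0
  · obtain ⟨k, hk⟩ := hz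
    set a : ℝ := (j k).re with ha
    set b : ℝ := (j k).im with hb
    set k' : K := algebraMap ℝ K b⁻¹ * (k - algebraMap ℝ K a) with hk'
    have hjk' : j k' = Complex.I := by
      rw [hk', map_mul, map_sub, AlgHom.commutes, AlgHom.commutes]
      have h1 : (algebraMap ℝ ℂ a : ℂ) = (a : ℂ) := rfl
      have h2 : (algebraMap ℝ ℂ b⁻¹ : ℂ) = ((b : ℂ))⁻¹ := by
        simp [Complex.ofReal_inv]
      rw [h1, h2]
      have h3 : j k - (a : ℂ) = (b : ℂ) * Complex.I := by
        rw [ha, hb]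
        apply Complex.ext <;> simp
      rw [h3, ← mul_assoc, inv_mul_cancel₀ (by
        rw [hb]; exact Complex.ofReal_ne_zero.mpr hk), one_mul]
    have hKf : IsField K := (Ideal.Quotient.maximal_ideal_iff_isField_quotient m).mp hm
    have hinj : Function.Injective j := by
      intro x y hxy
      by_contra hne
      obtain ⟨z, hz⟩ := hKf.mul_inv_cancel (sub_ne_zero.mpr hne)
      have h0 : j ((x - y) * z) = 0 := by rw [map_mul, map_sub, hxy, sub_self, zero_mul]
      rw [hz, map_one] at h0
      exact one_ne_zero h0
    have hsq : k' ^ 2 + 1 = 0 := by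
      apply hinj
      rw [map_add, map_pow, map_one, map_zero]
      show (j k') ^ 2 + 1 = 0
      rw [hjk', Complex.I_sq, neg_add_cancel]
    obtain ⟨u, hu⟩ := Ideal.Quotient.mk_surjective k'
    refine ⟨u, ?_⟩
    rw [← Ideal.Quotient.eq_zero_iff_mem, map_add, map_pow, map_one, hu, hsq]
  · exfalso
    push_neg at hz
    apply hψ
    refine ⟨AlgHom.comp ?_ (Ideal.Quotient.mkₐ ℝ m)⟩
    refine ⟨⟨⟨⟨fun k => (j k).re, by simp⟩, fun x y => ?_⟩, by simp, fun x y => by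
      simp [map_add]⟩, fun r => ?_⟩
    · show (j (x * y)).re = (j x).re * (j y).re
      rw [map_mul, Complex.mul_re, hz x, hz y, mul_zero, sub_zero]
    · show (j (algebraMap ℝ _ r)).re = r
      rw [AlgHom.commutes]
      exact Complex.ofReal_re r

lemma one_add_sq_pow (g : MvPolynomial (Fin n) ℝ) (N : ℕ) :
    ∃ s, IsSOS s ∧ (g ^ 2 + 1) ^ N = 1 + s := by
  induction N with
  | zero => exact ⟨0, IsSOS.zero, by simp⟩
  | succ N ih =>
    obtain ⟨s, hs, hsum⟩ := ih
    refine ⟨g ^ 2 + (s + s * g ^ 2), (IsSOS.sq g).add (hs.add (hs.mul (IsSOS.sq g))), ?_⟩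
    rw [pow_succ, hsum]
    ring

theorem statement_3' :
    (∃ ψ : MvPolynomial (Fin n) ℝ →+* ℝ,
        ∀ (f : MvPolynomial (Fin n) ℝ) (hf : f ∈ invariants G), ψ f = φ ⟨f, hf⟩) ↔
      (∀ (f : MvPolynomial (Fin n) ℝ) (hf : f ∈ invariants G),
        (∃ (m : ℕ) (g : Fin m → MvPolynomial (Fin n) ℝ), f = ∑ s, (g s) ^ 2) →
        0 ≤ φ ⟨f, hf⟩) := by
  constructor
  · rintro ⟨ψ, hψ⟩ f hf ⟨m, g, rfl⟩
    rw [← hψ _ hf, map_sum]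
    exact Finset.sum_nonneg fun s _ => by rw [map_pow]; positivity
  · intro hpos
    by_cases hψ : Nonempty ((MvPolynomial (Fin n) ℝ ⧸ extIdeal G φ) →ₐ[ℝ] ℝ)
    · obtain ⟨ψ₀⟩ := hψ
      refine ⟨(ψ₀ : (MvPolynomial (Fin n) ℝ ⧸ extIdeal G φ) →+* ℝ).comp
        (Ideal.Quotient.mk (extIdeal G φ)), fun f hf => ?_⟩
      have h1 := mk_invariant G φ hf
      show ψ₀ (Ideal.Quotient.mk (extIdeal G φ) f) = φ ⟨f, hf⟩
      rw [h1, AlgHom.commutes]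
      exact Algebra.algebraMap_self_apply _
    · exfalso
      haveI := finite_B G φ
      haveI : IsArtinianRing (MvPolynomial (Fin n) ℝ ⧸ extIdeal G φ) :=
        IsArtinianRing.of_finite ℝ _
      have hMfin : {I : Ideal (MvPolynomial (Fin n) ℝ ⧸ extIdeal G φ) | I.IsMaximal}.Finite :=
        IsArtinianRing.setOfPred_isMaximal_finite _
      haveI := hMfin.to_subtype
      choose u hu using fun (m : {I : Ideal (MvPolynomial (Fin n) ℝ ⧸ extIdeal G φ) |
          I.IsMaximal}) => exists_sqrt_neg_one G φ hψ m m.2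
      have hcop : Pairwise fun (i j : {I : Ideal (MvPolynomial (Fin n) ℝ ⧸ extIdeal G φ) |
          I.IsMaximal}) => IsCoprime (i : Ideal (MvPolynomial (Fin n) ℝ ⧸ extIdeal G φ))
          (j : Ideal (MvPolynomial (Fin n) ℝ ⧸ extIdeal G φ)) :=
        fun i j hij => Ideal.isCoprime_iff_sup_eq.mpr
          (Ideal.IsMaximal.coprime_of_ne i.2 j.2 fun h => hij (Subtype.ext h))
      obtain ⟨r, hr⟩ := Ideal.exists_forall_sub_mem_ideal hcop u
      have hrm : ∀ (m : {I : Ideal (MvPolynomial (Fin n) ℝ ⧸ extIdeal G φ) | I.IsMaximal}),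
          r ^ 2 + 1 ∈ (m : Ideal (MvPolynomial (Fin n) ℝ ⧸ extIdeal G φ)) := by
        intro m
        have h1 : r ^ 2 - (u m) ^ 2 ∈ (m : Ideal (MvPolynomial (Fin n) ℝ ⧸ extIdeal G φ)) := by
          have he : r ^ 2 - (u m) ^ 2 = (r - u m) * (r + u m) := by ring
          rw [he]
          exact Ideal.mul_mem_right _ _ (hr m)
        have h2 := Ideal.add_mem _ h1 (hu m)
        have he2 : r ^ 2 - u m ^ 2 + (u m ^ 2 + 1) = r ^ 2 + 1 := by ring
        rwa [he2] at h2
      have hjac : r ^ 2 + 1 ∈ Ideal.jacobson (⊥ : Ideal (MvPolynomial (Fin n) ℝ ⧸ extIdeal G φ)) := by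
        rw [Ideal.jacobson]
        refine Ideal.mem_sInf.mpr fun {J} hJ => hrm ⟨J, hJ.2⟩
      obtain ⟨N, hN⟩ := IsArtinianRing.isNilpotent_jacobson_bot
        (R := MvPolynomial (Fin n) ℝ ⧸ extIdeal G φ)
      have hzero : (r ^ 2 + 1) ^ N = 0 := by
        have h1 := Ideal.pow_mem_pow hjac N
        rw [hN] at h1
        simpa using h1
      obtain ⟨g, hg⟩ := Ideal.Quotient.mk_surjective r
      have hmem : (g ^ 2 + 1) ^ N ∈ extIdeal G φ := by
        rw [← Ideal.Quotient.eq_zero_iff_mem, map_pow, map_add, map_pow, map_one, hg, hzero]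
      obtain ⟨s, hs, hsum⟩ := one_add_sq_pow g N
      rw [hsum] at hmem
      have h0 := Phi_extIdeal_zero G φ hmem
      rw [Phi_add, Phi_one] at h0
      have hSOS : IsSOS (reynolds G s) := hs.reynolds G
      obtain ⟨mm, gg, hgg⟩ := hSOS
      have h2 : (0:ℝ) ≤ Phi G φ s := hpos (reynolds G s) (reynolds_mem G s) ⟨mm, gg, hgg⟩
      rw [show Phi G φ s = -1 by linarith] at h2
      linarith

/-- a ring homomorphism `φ : ℝ[X]^G → ℝ` extends to `ℝ[X]` iff `φ(f) ≥ 0`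
for every `f ∈ ℝ[X]^G` that is a sum of squares of polynomials. -/
theorem statement_3 {n : ℕ} (G : Subgroup (Matrix.GeneralLinearGroup (Fin n) ℝ)) [Finite G]
    (φ : invariants G →+* ℝ) :
    (∃ ψ : MvPolynomial (Fin n) ℝ →+* ℝ,
        ∀ (f : MvPolynomial (Fin n) ℝ) (hf : f ∈ invariants G), ψ f = φ ⟨f, hf⟩) ↔
      (∀ (f : MvPolynomial (Fin n) ℝ) (hf : f ∈ invariants G),
        (∃ (m : ℕ) (g : Fin m → MvPolynomial (Fin n) ℝ), f = ∑ s, (g s) ^ 2) →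
        0 ≤ φ ⟨f, hf⟩) :=
  statement_3' G φ
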